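/- arXiv:2010.13239 — 2 statements merged into one kernel-verified Lean document; each statement's English description precedes it below -/
import Mathlib

section
/- Let G be a groupoid and ≤ a partial order making G an ordered groupoid, with max G denoting the set of maximal elements. The following are equivalent: (i) max G is a subgroupoid of G; (ii) g ∈ max G implies r(g) ∈ max G; (iii) max G = { g ∈ G : r(g) is maximal among identities }. -/
/-- A "groupoid structure" on a type `G`: a partially defined multiplication
together with a total inversion. -/
structure GroupoidStr (G : Type*) where
  /-- `Def x y` means the product `x * y` is defined. -/
  Def : G → G → Prop
  /-- The partial multiplication. -/
  mul : ∀ x y, Def x y → G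
  /-- Inversion. -/
  inv : G → G
  inv_inv : ∀ x, inv (inv x) = x
  def_inv : ∀ x, Def (inv x) x

namespace GroupoidStr

variable {G : Type*} (g : GroupoidStr G)

/-- The domain identity `d x = x⁻¹ x`. -/
def d (x : G) : G := g.mul (g.inv x) x (g.def_inv x)

/-- The range identity `r x = x x⁻¹`. -/
def r (x : G) : G := g.d (g.inv x)

/-- `e` is an identity of the groupoid. -/
def IsId (e : G) : Prop := g.d e = e

/-- The set of identities `G₀`. -/
def ids : Set G := {e | g.IsId e}

end GroupoidStr

/-- The axioms making a `GroupoidStr` an honest groupoid. -/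
structure IsGroupoid {G : Type*} (g : GroupoidStr G) : Prop where
  def_iff : ∀ x y, g.Def x y ↔ g.d x = g.r y
  mul_assoc : ∀ x y z (h1 : g.Def x y) (h2 : g.Def y z)
      (h3 : g.Def (g.mul x y h1) z) (h4 : g.Def x (g.mul y z h2)),
      g.mul (g.mul x y h1) z h3 = g.mul x (g.mul y z h2) h4
  d_mul : ∀ x y (h : g.Def x y), g.d (g.mul x y h) = g.d y
  r_mul : ∀ x y (h : g.Def x y), g.r (g.mul x y h) = g.r x
  mul_d : ∀ x (h : g.Def x (g.d x)), g.mul x (g.d x) h = x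
  r_mul_self : ∀ x (h : g.Def (g.r x) x), g.mul (g.r x) x h = x
  inv_mul_eq_d : ∀ x (h : g.Def (g.inv x) x), g.mul (g.inv x) x h = g.d x
  d_isId : ∀ x, g.IsId (g.d x)

/-- An ordered groupoid: a groupoid with a partial order satisfying
(OG1), (OG2), (OG3) and (OG3*). -/
structure IsOrderedGroupoid {G : Type*} (g : GroupoidStr G) (le : G → G → Prop)
    extends IsGroupoid g : Prop where
  le_refl : ∀ x, le x x
  le_antisymm : ∀ x y, le x y → le y x → x = y
  le_trans : ∀ x y z, le x y → le y z → le x z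
  /-- (OG1) -/
  inv_le : ∀ x y, le x y → le (g.inv x) (g.inv y)
  /-- (OG2) -/
  mul_le : ∀ x y u v (h1 : g.Def x u) (h2 : g.Def y v),
      le x y → le u v → le (g.mul x u h1) (g.mul y v h2)
  /-- (OG3): unique restriction `(x|e)`. -/
  restrict : ∀ x e, g.IsId e → le e (g.d x) → ∃! z, le z x ∧ g.d z = e
  /-- (OG3*): unique corestriction `(e|x)`. -/
  corestrict : ∀ x e, g.IsId e → le e (g.r x) → ∃! z, le z x ∧ g.r z = e

/-- The set of maximal elements of `G` with respect to the partial order. -/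
def maxSet {G : Type*} (le : G → G → Prop) : Set G := {x | ∀ y, le x y → x = y}

/-- `H` is a subgroupoid: closed under inversion and the partial multiplication. -/
def IsSubgroupoid {G : Type*} (g : GroupoidStr G) (H : Set G) : Prop :=
  (∀ x ∈ H, g.inv x ∈ H) ∧
  ∀ x y (h : g.Def x y), x ∈ H → y ∈ H → g.mul x y h ∈ H


namespace MaxAux

variable {G : Type*}

theorem mul_congr (g : GroupoidStr G) {x x' y y' : G} (hx : x = x') (hy : y = y')
    (h : g.Def x y) (h' : g.Def x' y') : g.mul x y h = g.mul x' y' h' := by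
  subst hx; subst hy; rfl

theorem r_inv (g : GroupoidStr G) (x : G) : g.r (g.inv x) = g.d x := by
  simp only [GroupoidStr.r, GroupoidStr.d]
  exact mul_congr g (by rw [g.inv_inv]) (by rw [g.inv_inv]) _ _

theorem isId_r (g : GroupoidStr G) (hg : IsGroupoid g) (x : G) : g.IsId (g.r x) :=
  hg.d_isId _

theorem r_d (g : GroupoidStr G) (hg : IsGroupoid g) (x : G) : g.r (g.d x) = g.d x := by
  have h1 : g.r (g.d x) = g.r (g.inv x) := hg.r_mul _ _ _
  rw [h1, r_inv]

theorem r_of_isId (g : GroupoidStr G) (hg : IsGroupoid g) {e : G} (he : g.IsId e) :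
    g.r e = e := by
  conv_lhs => rw [← he]
  rw [r_d g hg, he]

theorem d_mono (g : GroupoidStr G) {le : G → G → Prop} (hog : IsOrderedGroupoid g le)
    {x y : G} (h : le x y) : le (g.d x) (g.d y) := by
  have := hog.mul_le (g.inv x) (g.inv y) x y (g.def_inv x) (g.def_inv y)
    (hog.inv_le _ _ h) h
  rwa [hog.inv_mul_eq_d, hog.inv_mul_eq_d] at this

theorem r_mono (g : GroupoidStr G) {le : G → G → Prop} (hog : IsOrderedGroupoid g le)
    {x y : G} (h : le x y) : le (g.r x) (g.r y) :=
  d_mono g hog (hog.inv_le _ _ h)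

/-- If `r x` is maximal among identities, then `x` is maximal. -/
theorem max_of_r_max (g : GroupoidStr G) {le : G → G → Prop}
    (hog : IsOrderedGroupoid g le) {x : G}
    (hmax : ∀ e : G, g.IsId e → le (g.r x) e → g.r x = e) : x ∈ maxSet le := by
  intro y hxy
  have heq : g.r x = g.r y := hmax _ (isId_r g hog.toIsGroupoid y) (r_mono g hog hxy)
  obtain ⟨z, -, huniq⟩ := hog.corestrict y (g.r y) (isId_r g hog.toIsGroupoid y)
    (hog.le_refl _)
  exact (huniq x ⟨hxy, heq⟩).trans (huniq y ⟨hog.le_refl y, rfl⟩).symm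

end MaxAux

/-- For an ordered groupoid, the following are equivalent:
(i) the maximal elements form a subgroupoid;
(ii) `x` maximal implies `r x` maximal;
(iii) the maximal elements are exactly those `x` whose range `r x` is maximal
among the identities. -/
theorem maxSet_subgroupoid_tfae {G : Type*} (g : GroupoidStr G) (le : G → G → Prop)
    (hog : IsOrderedGroupoid g le) :
    (IsSubgroupoid g (maxSet le) ↔ ∀ x ∈ maxSet le, g.r x ∈ maxSet le) ∧
    ((∀ x ∈ maxSet le, g.r x ∈ maxSet le) ↔
      maxSet le = {x | ∀ e : G, g.IsId e → le (g.r x) e → g.r x = e}) := by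
  have hg := hog.toIsGroupoid
  have hii_of_iii : (maxSet le = {x | ∀ e : G, g.IsId e → le (g.r x) e → g.r x = e}) →
      ∀ x ∈ maxSet le, g.r x ∈ maxSet le := by
    intro heq x hx
    rw [heq] at hx ⊢
    intro e he hle
    rw [MaxAux.r_of_isId g hg (MaxAux.isId_r g hg x)] at hle ⊢
    exact hx e he hle
  constructor
  · constructor
    · intro hsub x hx
      have hdef : g.Def x (g.inv x) := by
        rw [hog.def_iff, MaxAux.r_inv]
      have hmem := hsub.2 x (g.inv x) hdef hx (hsub.1 x hx)
      have : g.mul x (g.inv x) hdef = g.r x :=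
        MaxAux.mul_congr g (g.inv_inv x).symm rfl _ _
      rwa [this] at hmem
    · intro h2
      constructor
      · intro x hx y hy
        have : le x (g.inv y) := by
          have := hog.inv_le _ _ hy
          rwa [g.inv_inv] at this
        rw [hx _ this, g.inv_inv]
      · intro x y h hx hy
        apply MaxAux.max_of_r_max g hog
        intro e he hle
        rw [hg.r_mul] at hle ⊢
        exact h2 x hx e hle
  · constructor
    · intro h2
      ext x
      simp only [Set.mem_setOf_eq]
      constructor
      · intro hx e he hle
        exact h2 x hx e hle
      · intro hx
        exact MaxAux.max_of_r_max g hog hx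
    · exact hii_of_iii
end

section
/- Let R be a commutative ring, X = {1,…,m}, k ≤ m, n = C(m,k), and A = ⊕_{i=1}^{nk} R e_i with orthogonal idempotents summing to 1. Let S = { s ∈ I(X) : |dom(s)| ≤ k } and define β on maximal elements s (with dom(s) = M_i, im(s) = M_j among the k-subsets M_1,…,M_n of X) by β_s(Σ_l r_l e_{(i−1)k+l}) = Σ_l r_l e_{(j−1)k+σ_s(l)} where σ_s is the permutation induced by s, and β_s = 0 for non-maximal s. Then β is an orthogonal action of the inverse semigroup S on A. -/
open Finset

/-- The domain of a partial bijection of `Fin m`, as a finset. -/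
noncomputable def pDom {m : ℕ} (s : Fin m ≃. Fin m) : Finset (Fin m) :=
  Finset.univ.filter fun a => (s a).isSome

/-- The position, for the increasing enumeration, of `x` in a `k`-element
finset `F` (junk value if `x ∉ F`). -/
noncomputable def posOf {m k : ℕ} (hk : 0 < k) (F : Finset (Fin m))
    (hF : F.card = k) (x : Fin m) : Fin k :=
  if hx : x ∈ F then (F.orderIsoOfFin hF).symm ⟨x, hx⟩ else ⟨0, hk⟩

/-- The `l`-th element of a `k`-element finset, in increasing order. -/
noncomputable def elemAt {m k : ℕ} (F : Finset (Fin m)) (hF : F.card = k)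
    (l : Fin k) : Fin m := (F.orderIsoOfFin hF l : Fin m)

/-!
For a `k`-subset `F` of `X` let `B_F = ⊕_l R e_{F,l}` be its block; `E_s` is the block of
`im s` when `s` is maximal and `0` otherwise. On a block, `β_s` moves coefficients along the
permutation `σ_s` into the block of `im s`; since the `e_{i,l}` are orthogonal idempotents
forming an `R`-basis, such a transport is a ring isomorphism `E_{s⁻¹} ≅ E_s`.
If `|dom(st)| = k`, then, all domains having at most `k` elements, `dom(st) = dom t`,
`im t = dom s`, `im(st) = im s` and `σ_{st} = σ_s σ_t`, which gives `β_{st} = β_s β_t`; if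
not, either `t` is not maximal or `β_t a` lies in the two different blocks `B_{im t}` and
`B_{dom s}`, so `a = 0`. Idempotents of `S` are partial identities, determined by their image;
the blocks span `A` because `∑ e_{i,l} = 1`, and are independent because `∑_l e_{i,l}` is the
identity on `B_i` and kills the other blocks.
-/

section PartialBijection

variable {m k : ℕ}

lemma mem_pDom {s : Fin m ≃. Fin m} {x : Fin m} : x ∈ pDom s ↔ (s x).isSome := by
  simp [pDom]

noncomputable def pDomEquiv (s : Fin m ≃. Fin m) : pDom s ≃ pDom s.symm where
  toFun x := ⟨(s x).get (mem_pDom.1 x.2), mem_pDom.2 (s.isSome_symm_get _)⟩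
  invFun y := ⟨(s.symm y).get (mem_pDom.1 y.2), mem_pDom.2 (s.symm.isSome_symm_get _)⟩
  left_inv x := Subtype.ext <| Option.some_injective _ <| by
    rw [Option.some_get, s.eq_some_iff, Option.some_get]
  right_inv y := Subtype.ext <| Option.some_injective _ <| by
    rw [Option.some_get, ← s.eq_some_iff, Option.some_get]

lemma apply_eq_some_pDomEquiv (s : Fin m ≃. Fin m) (x : pDom s) :
    s x = some (pDomEquiv s x : Fin m) :=
  (Option.some_get _).symm

lemma card_pDom_symm (s : Fin m ≃. Fin m) : (pDom s.symm).card = (pDom s).card := by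
  simpa using Fintype.card_congr (pDomEquiv s).symm

lemma pDom_trans_subset (s t : Fin m ≃. Fin m) : pDom (t.trans s) ⊆ pDom t := by
  intro x hx
  rw [mem_pDom] at hx ⊢
  cases h : t x <;> simp_all [PEquiv.trans]

lemma pDom_trans_eq_iff (s t : Fin m ≃. Fin m) :
    pDom (t.trans s) = pDom t ↔ pDom t.symm ⊆ pDom s := by
  refine ⟨fun h y hy => ?_, fun h => (pDom_trans_subset s t).antisymm fun x hx => ?_⟩
  · obtain ⟨x, hx⟩ := Option.isSome_iff_exists.1 (mem_pDom.1 hy)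
    have hxt : x ∈ pDom (t.trans s) := h ▸ mem_pDom.2 (by simp [t.eq_some_iff.1 hx])
    simpa [mem_pDom, PEquiv.trans, t.eq_some_iff.1 hx] using hxt
  · obtain ⟨y, hy⟩ := Option.isSome_iff_exists.1 (mem_pDom.1 hx)
    have hys : y ∈ pDom s := h (mem_pDom.2 (by simp [t.eq_some_iff.2 hy]))
    simpa [mem_pDom, PEquiv.trans, hy] using hys

lemma pDom_trans_eq_of_card_eq {s t : Fin m ≃. Fin m} (hs : (pDom s).card ≤ k)
    (ht : (pDom t).card ≤ k) (hst : (pDom (t.trans s)).card = k) :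
    pDom (t.trans s) = pDom t ∧ pDom t.symm = pDom s ∧ pDom (t.trans s).symm = pDom s.symm := by
  have hdom : pDom (t.trans s) = pDom t :=
    eq_of_subset_of_card_le (pDom_trans_subset s t) (hst ▸ ht)
  refine ⟨hdom, eq_of_subset_of_card_le ((pDom_trans_eq_iff s t).1 hdom) ?_,
    eq_of_subset_of_card_le ?_ ?_⟩
  · rw [card_pDom_symm, ← hdom, hst]; exact hs
  · simpa only [PEquiv.symm_trans_rev] using pDom_trans_subset t.symm s.symm
  · rw [card_pDom_symm, card_pDom_symm, hst]; exact hs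

end PartialBijection

section Positions

variable {m k : ℕ}

lemma elemAt_injective (F : Finset (Fin m)) (hF : F.card = k) :
    Function.Injective (elemAt F hF) :=
  fun _ _ h => (F.orderIsoOfFin hF).injective (Subtype.ext h)

lemma elemAt_congr {F G : Finset (Fin m)} (h : F = G) (hF : F.card = k) (hG : G.card = k)
    (l : Fin k) : elemAt F hF l = elemAt G hG l := by
  subst h; rfl

lemma posOf_elemAt (hk : 0 < k) (F : Finset (Fin m)) (hF : F.card = k) (l : Fin k) :
    posOf hk F hF (elemAt F hF l) = l := by
  rw [posOf, dif_pos (show elemAt F hF l ∈ F from (F.orderIsoOfFin hF l).2)]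
  exact (F.orderIsoOfFin hF).symm_apply_apply l

/-- `σ_s` of the paper: `s` sends the `l`-th element of `dom s` to the `posPerm s hd hr l`-th
element of `im s`. -/
noncomputable def posPerm (s : Fin m ≃. Fin m) (hd : (pDom s).card = k)
    (hr : (pDom s.symm).card = k) : Equiv.Perm (Fin k) :=
  ((pDom s).orderIsoOfFin hd).toEquiv.trans
    ((pDomEquiv s).trans ((pDom s.symm).orderIsoOfFin hr).toEquiv.symm)

lemma apply_elemAt (s : Fin m ≃. Fin m) (hd : (pDom s).card = k)
    (hr : (pDom s.symm).card = k) (l : Fin k) :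
    s (elemAt (pDom s) hd l) = some (elemAt (pDom s.symm) hr (posPerm s hd hr l)) :=
  (apply_eq_some_pDomEquiv s _).trans
    (congrArg some (congrArg Subtype.val (OrderIso.apply_symm_apply _ _).symm))

lemma posPerm_eq_posOf (hk : 0 < k) (s : Fin m ≃. Fin m) (hd : (pDom s).card = k)
    (hr : (pDom s.symm).card = k) (l : Fin k) :
    posPerm s hd hr l =
      posOf hk (pDom s.symm) hr ((s (elemAt (pDom s) hd l)).getD (elemAt (pDom s) hd l)) := by
  rw [apply_elemAt s hd hr, Option.getD_some, posOf_elemAt]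

lemma posPerm_trans {s t : Fin m ≃. Fin m} (hds : (pDom s).card = k)
    (hrs : (pDom s.symm).card = k) (hdt : (pDom t).card = k) (hrt : (pDom t.symm).card = k)
    (hdst : (pDom (t.trans s)).card = k) (hrst : (pDom (t.trans s).symm).card = k)
    (hdom : pDom (t.trans s) = pDom t) (hmid : pDom t.symm = pDom s)
    (him : pDom (t.trans s).symm = pDom s.symm) :
    posPerm (t.trans s) hdst hrst = (posPerm t hdt hrt).trans (posPerm s hds hrs) := by
  ext l : 1
  apply elemAt_injective _ hrs
  apply Option.some_injective
  rw [Equiv.trans_apply, ← elemAt_congr him hrst, ← apply_elemAt, ← apply_elemAt,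
    ← elemAt_congr hmid hrt, elemAt_congr hdom hdst hdt]
  simp [PEquiv.trans, apply_elemAt t hdt hrt]

end Positions

section Idempotents

variable {m : ℕ}

lemma eq_some_iff_of_trans_self {f : Fin m ≃. Fin m} (hf : f.trans f = f) {x y : Fin m} :
    f x = some y ↔ y = x ∧ x ∈ pDom f.symm := by
  have fixed : ∀ {x y}, f x = some y → y = x := fun {x y} hxy => by
    have hyy : f y = some y := by
      simpa [PEquiv.trans, hxy] using congrArg (fun g : Fin m ≃. Fin m => g x) hf
    exact Option.some_injective _ ((f.eq_some_iff.2 hyy).symm.trans (f.eq_some_iff.2 hxy))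
  refine ⟨fun hxy => ⟨fixed hxy, ?_⟩, fun ⟨hyx, hx⟩ => ?_⟩
  · rw [fixed hxy] at hxy
    exact mem_pDom.2 (by simp [f.eq_some_iff.2 hxy])
  · obtain ⟨z, hz⟩ := Option.isSome_iff_exists.1 (mem_pDom.1 hx)
    have hzx := f.eq_some_iff.1 hz
    obtain rfl := fixed hzx
    rwa [hyx]

lemma eq_of_trans_self {f g : Fin m ≃. Fin m} (hf : f.trans f = f) (hg : g.trans g = g)
    (h : pDom f.symm = pDom g.symm) : f = g :=
  PEquiv.ext fun _ => Option.ext fun _ => by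
    rw [eq_some_iff_of_trans_self hf, eq_some_iff_of_trans_self hg, h]

lemma pDom_ofSet (F : Finset (Fin m)) : pDom (PEquiv.ofSet (F : Set (Fin m))) = F := by
  ext x; by_cases hx : x ∈ F <;> simp [mem_pDom, PEquiv.ofSet, hx]

lemma ofSet_trans_self (F : Finset (Fin m)) :
    (PEquiv.ofSet (F : Set (Fin m))).trans (PEquiv.ofSet (F : Set (Fin m))) =
      PEquiv.ofSet (F : Set (Fin m)) :=
  PEquiv.ext fun x => by by_cases hx : x ∈ F <;> simp [PEquiv.trans, PEquiv.ofSet, hx]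

end Idempotents

section Blocks

variable {R A : Type*} [CommRing R] [CommRing A] [Algebra R A] {n k : ℕ}
  {e : Fin n → Fin k → A}

lemma linearCombination_mul_linearCombination
    (horth : ∀ i l i' l', e i l * e i' l' = if i = i' ∧ l = l' then e i l else 0)
    (i j : Fin n) (c c' : Fin k → R) :
    Fintype.linearCombination R (e i) c * Fintype.linearCombination R (e j) c' =
      if i = j then Fintype.linearCombination R (e i) (c * c') else 0 := by
  simp only [Fintype.linearCombination_apply, Finset.sum_mul_sum, smul_mul_smul_comm, horth]
  by_cases hij : i = j <;> simp [hij]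

lemma linearCombination_block_injective
    (hfree : ∀ a : A, ∃! c : Fin n → Fin k → R, a = ∑ i, ∑ l, c i l • e i l)
    (i : Fin n) :
    Function.Injective (Fintype.linearCombination R (e i)) := by
  intro c c' h
  have expand : ∀ c, Fintype.linearCombination R (e i) c =
      ∑ i', ∑ l, (Pi.single i c : Fin n → Fin k → R) i' l • e i' l :=
    fun c => by simp [Fintype.linearCombination_apply, Pi.single_apply, ite_apply, ite_smul]
  obtain ⟨d, -, hu⟩ := hfree (Fintype.linearCombination R (e i) c)
  exact Pi.single_injective i ((hu _ (expand c)).trans (hu _ (h.trans (expand c'))).symm)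

variable (R e) in
structure IsIdempotentBasis : Prop where
  mul_eq : ∀ i l i' l', e i l * e i' l' = if i = i' ∧ l = l' then e i l else 0
  existsUnique : ∀ a : A, ∃! c : Fin n → Fin k → R, a = ∑ i, ∑ l, c i l • e i l

namespace IsIdempotentBasis

lemma mem_span_block_iff (he : IsIdempotentBasis R e) {i : Fin n} {a : A} :
    a ∈ Ideal.span (Set.range (e i)) ↔
      ∃ c : Fin k → R, Fintype.linearCombination R (e i) c = a := by
  refine ⟨fun ha => ?_, ?_⟩
  · induction ha using Submodule.span_induction with
    | mem x hx =>
      obtain ⟨l, rfl⟩ := hx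
      exact ⟨Pi.single l 1, by rw [Fintype.linearCombination_apply_single, one_smul]⟩
    | zero => exact ⟨0, map_zero _⟩
    | add x y _ _ hx hy =>
      obtain ⟨c, rfl⟩ := hx
      obtain ⟨c', rfl⟩ := hy
      exact ⟨c + c', map_add _ _ _⟩
    | smul x y _ hy =>
      obtain ⟨c, rfl⟩ := hy
      obtain ⟨d, hd, -⟩ := he.existsUnique x
      refine ⟨d i * c, ?_⟩
      simp only [smul_eq_mul, hd, ← Fintype.linearCombination_apply, Finset.sum_mul,
        linearCombination_mul_linearCombination he.mul_eq, Finset.sum_ite_eq', Finset.mem_univ,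
        if_true]
  · rintro ⟨c, rfl⟩
    rw [Fintype.linearCombination_apply]
    exact Ideal.sum_mem _ fun l _ =>
      Submodule.smul_of_tower_mem _ _ (Ideal.subset_span ⟨l, rfl⟩)

lemma mul_sum_block_eq_ite (he : IsIdempotentBasis R e) {i j : Fin n} {a : A}
    (ha : a ∈ Ideal.span (Set.range (e j))) : a * ∑ l, e i l = if j = i then a else 0 := by
  obtain ⟨c, rfl⟩ := he.mem_span_block_iff.1 ha
  have hone : ∑ l, e i l = Fintype.linearCombination R (e i) 1 := by
    simp [Fintype.linearCombination_apply]
  rw [hone, linearCombination_mul_linearCombination he.mul_eq, mul_one]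

end IsIdempotentBasis

end Blocks

section Transport

variable {R A : Type*} [CommRing R] [CommRing A] [Algebra R A] {n k : ℕ}
  {e : Fin n → Fin k → A}

variable (R e) in
def IsBlockTransport (β : A → A) (I J : Ideal A) : Prop :=
  (I = ⊥ ∧ J = ⊥ ∧ β 0 = 0) ∨
    ∃ (i j : Fin n) (σ : Equiv.Perm (Fin k)),
      I = Ideal.span (Set.range (e i)) ∧ J = Ideal.span (Set.range (e j)) ∧
      ∀ c : Fin k → R, β (Fintype.linearCombination R (e i) c) =
        Fintype.linearCombination R (e j) (c ∘ σ)

namespace IsBlockTransport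

variable {β : A → A} {I J : Ideal A}

lemma map_zero (h : IsBlockTransport R e β I J) : β 0 = 0 := by
  rcases h with ⟨-, -, h0⟩ | ⟨i, j, σ, -, -, hβ⟩
  · exact h0
  · simpa using hβ 0

lemma mapsTo (he : IsIdempotentBasis R e) (h : IsBlockTransport R e β I J) :
    ∀ a ∈ I, β a ∈ J := by
  rcases h with ⟨rfl, rfl, h0⟩ | ⟨i, j, σ, rfl, rfl, hβ⟩
  · rintro a rfl; rw [h0]; exact Submodule.zero_mem _
  · intro a ha
    obtain ⟨c, rfl⟩ := he.mem_span_block_iff.1 ha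
    exact he.mem_span_block_iff.2 ⟨_, (hβ c).symm⟩

lemma surjOn (he : IsIdempotentBasis R e) (h : IsBlockTransport R e β I J) :
    ∀ b ∈ J, ∃ a ∈ I, β a = b := by
  rcases h with ⟨rfl, rfl, h0⟩ | ⟨i, j, σ, rfl, rfl, hβ⟩
  · rintro b rfl; exact ⟨0, Submodule.zero_mem _, h0⟩
  · intro b hb
    obtain ⟨d, rfl⟩ := he.mem_span_block_iff.1 hb
    refine ⟨_, he.mem_span_block_iff.2 ⟨d ∘ σ.symm, rfl⟩, ?_⟩
    rw [hβ, Function.comp_assoc, Equiv.symm_comp_self, Function.comp_id]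

lemma injOn (he : IsIdempotentBasis R e) (h : IsBlockTransport R e β I J) :
    ∀ a ∈ I, ∀ b ∈ I, β a = β b → a = b := by
  rcases h with ⟨rfl, -, -⟩ | ⟨i, j, σ, rfl, rfl, hβ⟩
  · rintro a rfl b rfl -; rfl
  · intro a ha b hb hab
    obtain ⟨c, rfl⟩ := he.mem_span_block_iff.1 ha
    obtain ⟨c', rfl⟩ := he.mem_span_block_iff.1 hb
    rw [hβ, hβ] at hab
    have hcc := linearCombination_block_injective he.existsUnique j hab
    rw [σ.surjective.injective_comp_right hcc]

lemma map_add (he : IsIdempotentBasis R e) (h : IsBlockTransport R e β I J) :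
    ∀ a ∈ I, ∀ b ∈ I, β (a + b) = β a + β b := by
  rcases h with ⟨rfl, -, h0⟩ | ⟨i, j, σ, rfl, rfl, hβ⟩
  · rintro a rfl b rfl; simp [h0]
  · intro a ha b hb
    obtain ⟨c, rfl⟩ := he.mem_span_block_iff.1 ha
    obtain ⟨c', rfl⟩ := he.mem_span_block_iff.1 hb
    rw [← _root_.map_add, hβ, hβ, hβ, ← _root_.map_add]
    rfl

lemma map_mul (he : IsIdempotentBasis R e) (h : IsBlockTransport R e β I J) :
    ∀ a ∈ I, ∀ b ∈ I, β (a * b) = β a * β b := by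
  rcases h with ⟨rfl, -, h0⟩ | ⟨i, j, σ, rfl, rfl, hβ⟩
  · rintro a rfl b rfl; simp [h0]
  · intro a ha b hb
    obtain ⟨c, rfl⟩ := he.mem_span_block_iff.1 ha
    obtain ⟨c', rfl⟩ := he.mem_span_block_iff.1 hb
    rw [linearCombination_mul_linearCombination he.mul_eq, if_pos rfl, hβ, hβ, hβ,
      linearCombination_mul_linearCombination he.mul_eq, if_pos rfl]
    rfl

lemma map_smul (he : IsIdempotentBasis R e) (h : IsBlockTransport R e β I J) :
    ∀ r : R, ∀ a ∈ I, β (r • a) = r • β a := by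
  rcases h with ⟨rfl, -, h0⟩ | ⟨i, j, σ, rfl, rfl, hβ⟩
  · rintro r a rfl; simp [h0]
  · intro r a ha
    obtain ⟨c, rfl⟩ := he.mem_span_block_iff.1 ha
    rw [← _root_.map_smul, hβ, hβ, ← _root_.map_smul]
    rfl

end IsBlockTransport
end Transport

section BlockIdeal

variable {R A : Type*} [CommRing R] [CommRing A] [Algebra R A] {m n k : ℕ}
  {M : Fin n ≃ {F : Finset (Fin m) // F.card = k}} {e : Fin n → Fin k → A}

variable (M e) in
/-- The ideal `E_s` of a partial bijection `s` with image `F`. -/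
noncomputable def blockIdeal (F : Finset (Fin m)) : Ideal A :=
  ⨆ h : F.card = k, Ideal.span (Set.range (e (M.symm ⟨F, h⟩)))

lemma blockIdeal_of_card_eq {F : Finset (Fin m)} (hF : F.card = k) :
    blockIdeal M e F = Ideal.span (Set.range (e (M.symm ⟨F, hF⟩))) :=
  iSup_pos hF

lemma blockIdeal_of_card_ne {F : Finset (Fin m)} (hF : F.card ≠ k) : blockIdeal M e F = ⊥ :=
  iSup_neg hF

lemma disjoint_blockIdeal_iSup (he : IsIdempotentBasis R e)
    (F : Finset (Fin m)) :
    Disjoint (blockIdeal M e F) (⨆ (G) (_ : G ≠ F), blockIdeal M e G) := by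
  by_cases hF : F.card = k
  · set i := M.symm ⟨F, hF⟩
    have hle : (⨆ (G) (_ : G ≠ F), blockIdeal M e G) ≤
        LinearMap.ker (LinearMap.mulRight A (∑ l, e i l)) := by
      refine iSup₂_le fun G hG => ?_
      by_cases hG' : G.card = k
      · intro a ha
        rw [blockIdeal_of_card_eq hG'] at ha
        rw [LinearMap.mem_ker, LinearMap.mulRight_apply, he.mul_sum_block_eq_ite ha,
          if_neg fun h => hG (congrArg Subtype.val (M.symm.injective h))]
      · simp [blockIdeal_of_card_ne hG']
    refine Disjoint.mono_right hle (Submodule.disjoint_def.2 fun a ha ha' => ?_)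
    rw [blockIdeal_of_card_eq hF] at ha
    rwa [LinearMap.mem_ker, LinearMap.mulRight_apply, he.mul_sum_block_eq_ite ha,
      if_pos rfl] at ha'
  · simp [blockIdeal_of_card_ne hF]

lemma disjoint_blockIdeal (he : IsIdempotentBasis R e)
    {F G : Finset (Fin m)} (hFG : F ≠ G) : Disjoint (blockIdeal M e F) (blockIdeal M e G) :=
  (disjoint_blockIdeal_iSup he F).mono_right (le_iSup₂_of_le G hFG.symm le_rfl)

end BlockIdeal

section Action

variable {R A : Type*} [CommRing R] [CommRing A] [Algebra R A] {m n k : ℕ}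
  {M : Fin n ≃ {F : Finset (Fin m) // F.card = k}} {e : Fin n → Fin k → A}

variable (R M e) in
def MovesBlocks (s : Fin m ≃. Fin m) (β : A → A) : Prop :=
  ∀ (hd : (pDom s).card = k) (hr : (pDom s.symm).card = k) (c : Fin k → R),
    β (Fintype.linearCombination R (e (M.symm ⟨pDom s, hd⟩)) c) =
      Fintype.linearCombination R (e (M.symm ⟨pDom s.symm, hr⟩)) (c ∘ (posPerm s hd hr).symm)

lemma movesBlocks_of_posOf (hk : 0 < k) {s : Fin m ≃. Fin m} {β : A → A}
    (h : ∀ (hd : (pDom s).card = k) (hr : (pDom s.symm).card = k) (c : Fin k → R),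
      β (∑ l, c l • e (M.symm ⟨pDom s, hd⟩) l) =
        ∑ l, c l • e (M.symm ⟨pDom s.symm, hr⟩)
          (posOf hk (pDom s.symm) hr ((s (elemAt (pDom s) hd l)).getD (elemAt (pDom s) hd l)))) :
    MovesBlocks R M e s β := by
  intro hd hr c
  simp only [Fintype.linearCombination_apply, h hd hr c, ← posPerm_eq_posOf hk s hd hr]
  simpa using Equiv.sum_comp (posPerm s hd hr) fun l =>
    c ((posPerm s hd hr).symm l) • e (M.symm ⟨pDom s.symm, hr⟩) l

lemma MovesBlocks.isBlockTransport {s : Fin m ≃. Fin m} {β : A → A}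
    (h : MovesBlocks R M e s β) (h0 : β 0 = 0) :
    IsBlockTransport R e β (blockIdeal M e (pDom s)) (blockIdeal M e (pDom s.symm)) := by
  by_cases hd : (pDom s).card = k
  · have hr := (card_pDom_symm s).trans hd
    exact Or.inr ⟨_, _, _, blockIdeal_of_card_eq hd, blockIdeal_of_card_eq hr, h hd hr⟩
  · have hr : (pDom s.symm).card ≠ k := by rwa [card_pDom_symm]
    exact Or.inl ⟨blockIdeal_of_card_ne hd, blockIdeal_of_card_ne hr, h0⟩

lemma mem_blockIdeal_trans_iff (he : IsIdempotentBasis R e)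
    {s t : Fin m ≃. Fin m} (hs : (pDom s).card ≤ k) (ht : (pDom t).card ≤ k) {β : A → A}
    (hβ : IsBlockTransport R e β (blockIdeal M e (pDom t)) (blockIdeal M e (pDom t.symm)))
    (a : A) :
    a ∈ blockIdeal M e (pDom (t.trans s)) ↔
      a ∈ blockIdeal M e (pDom t) ∧ β a ∈ blockIdeal M e (pDom s) := by
  by_cases hst : (pDom (t.trans s)).card = k
  · obtain ⟨hdom, hmid, -⟩ := pDom_trans_eq_of_card_eq hs ht hst
    rw [hdom, ← hmid]
    exact ⟨fun ha => ⟨ha, hβ.mapsTo he a ha⟩, And.left⟩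
  · rw [blockIdeal_of_card_ne hst, Submodule.mem_bot]
    refine ⟨?_, fun ⟨ha, hβa⟩ => ?_⟩
    · rintro rfl
      rw [hβ.map_zero]
      exact ⟨zero_mem _, zero_mem _⟩
    by_cases hmid : pDom t.symm = pDom s
    · rwa [← (pDom_trans_eq_iff s t).2 hmid.subset, blockIdeal_of_card_ne hst,
        Submodule.mem_bot] at ha
    · have hβa0 : β a = 0 := Submodule.disjoint_def.1 (disjoint_blockIdeal he hmid) _
        (hβ.mapsTo he a ha) hβa
      exact hβ.injOn he a ha 0 (zero_mem _) (hβa0.trans hβ.map_zero.symm)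

lemma apply_trans_of_mem_blockIdeal (he : IsIdempotentBasis R e)
    {β : (Fin m ≃. Fin m) → A → A}
    (hβ : ∀ u : Fin m ≃. Fin m, (pDom u).card ≤ k → MovesBlocks R M e u (β u))
    (h0 : ∀ u, β u 0 = 0) {s t : Fin m ≃. Fin m} (hs : (pDom s).card ≤ k)
    (ht : (pDom t).card ≤ k) {a : A} (ha : a ∈ blockIdeal M e (pDom (t.trans s))) :
    β (t.trans s) a = β s (β t a) := by
  by_cases hst : (pDom (t.trans s)).card = k
  · obtain ⟨hdom, hmid, him⟩ := pDom_trans_eq_of_card_eq hs ht hst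
    have hdt : (pDom t).card = k := hdom ▸ hst
    have hrt := (card_pDom_symm t).trans hdt
    have hds : (pDom s).card = k := hmid ▸ hrt
    have hrs := (card_pDom_symm s).trans hds
    have hrst := (card_pDom_symm _).trans hst
    rw [blockIdeal_of_card_eq hst] at ha
    obtain ⟨c, rfl⟩ := he.mem_span_block_iff.1 ha
    rw [hβ _ hst.le hst hrst, show M.symm ⟨_, hst⟩ = M.symm ⟨_, hdt⟩ from
        congrArg M.symm (Subtype.ext hdom), hβ t ht hdt hrt,
      show M.symm ⟨_, hrt⟩ = M.symm ⟨_, hds⟩ from congrArg M.symm (Subtype.ext hmid),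
      hβ s hs hds hrs, show M.symm ⟨_, hrst⟩ = M.symm ⟨_, hrs⟩ from
        congrArg M.symm (Subtype.ext him),
      posPerm_trans hds hrs hdt hrt hst hrst hdom hmid him]
    rfl
  · rw [blockIdeal_of_card_ne hst, Submodule.mem_bot] at ha
    rw [ha, h0, h0, h0]

end Action

section IdempotentBlocks

variable {R A : Type*} [CommRing R] [CommRing A] [Algebra R A] {m n k : ℕ}
  {M : Fin n ≃ {F : Finset (Fin m) // F.card = k}} {e : Fin n → Fin k → A}

lemma iSup_blockIdeal_trans_self_eq_top (hsum : (∑ i, ∑ l, e i l) = 1) :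
    (⨆ f : {f : Fin m ≃. Fin m // (pDom f).card ≤ k ∧ f.trans f = f},
      blockIdeal M e (pDom f.1.symm)) = ⊤ := by
  rw [Ideal.eq_top_iff_one, ← hsum]
  refine Ideal.sum_mem _ fun i _ => Ideal.sum_mem _ fun l _ => ?_
  refine Submodule.mem_iSup_of_mem ⟨PEquiv.ofSet ((M i : Finset (Fin m)) : Set (Fin m)),
    by rw [pDom_ofSet]; exact (M i).2.le, ofSet_trans_self _⟩ ?_
  rw [PEquiv.ofSet_symm, pDom_ofSet, blockIdeal_of_card_eq (M i).2, Subtype.coe_eta,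
    Equiv.symm_apply_apply]
  exact Ideal.subset_span ⟨l, rfl⟩

lemma disjoint_blockIdeal_iSup_of_trans_self (he : IsIdempotentBasis R e)
    {P : (Fin m ≃. Fin m) → Prop} (f : {f : Fin m ≃. Fin m // P f ∧ f.trans f = f}) :
    Disjoint (blockIdeal M e (pDom f.1.symm))
      (⨆ g : {g : {f : Fin m ≃. Fin m // P f ∧ f.trans f = f} // g ≠ f},
        blockIdeal M e (pDom g.1.1.symm)) :=
  (disjoint_blockIdeal_iSup he _).mono_right <| iSup_le fun g =>
    le_iSup₂_of_le (pDom g.1.1.symm)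
      (fun h => g.2 (Subtype.ext (eq_of_trans_self g.1.2.2 f.2.2 h))) le_rfl

end IdempotentBlocks

theorem exgeral_orthogonal_action_general
    (R A : Type*) [CommRing R] [CommRing A] [Algebra R A]
    (m k n : ℕ) (hk : 0 < k)
    (M : Fin n ≃ {F : Finset (Fin m) // F.card = k})
    (e : Fin n → Fin k → A)
    (horth : ∀ i l i' l', e i l * e i' l' = if i = i' ∧ l = l' then e i l else 0)
    (hsum : (∑ i, ∑ l, e i l) = 1)
    (hfree : ∀ a : A, ∃! c : Fin n → Fin k → R, a = ∑ i, ∑ l, c i l • e i l)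
    (S : Set (Fin m ≃. Fin m)) (hS : S = {s | (pDom s).card ≤ k})
    (E : (Fin m ≃. Fin m) → Ideal A) (beta : (Fin m ≃. Fin m) → A → A)
    (hEmax : ∀ s ∈ S, ∀ hr : (pDom s.symm).card = k,
      E s = Ideal.span (Set.range (e (M.symm ⟨pDom s.symm, hr⟩))))
    (hEbot : ∀ s ∈ S, (pDom s.symm).card ≠ k → E s = ⊥)
    (hbetamax : ∀ s ∈ S, ∀ (hd : (pDom s).card = k) (hr : (pDom s.symm).card = k)
        (c : Fin k → R),
      beta s (∑ l, c l • e (M.symm ⟨pDom s, hd⟩) l) =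
        ∑ l, c l • e (M.symm ⟨pDom s.symm, hr⟩)
          (posOf hk (pDom s.symm) hr
            ((s (elemAt (pDom s) hd l)).getD (elemAt (pDom s) hd l))))
    (hbetazero : ∀ s, beta s 0 = 0) :
    -- β is an action of the inverse semigroup S on A:
    (∀ s ∈ S, ∀ a ∈ E s.symm, beta s a ∈ E s) ∧
    (∀ s ∈ S, ∀ b ∈ E s, ∃ a ∈ E s.symm, beta s a = b) ∧
    (∀ s ∈ S, ∀ a ∈ E s.symm, ∀ b ∈ E s.symm, beta s a = beta s b → a = b) ∧
    (∀ s ∈ S, ∀ a ∈ E s.symm, ∀ b ∈ E s.symm,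
      beta s (a + b) = beta s a + beta s b) ∧
    (∀ s ∈ S, ∀ a ∈ E s.symm, ∀ b ∈ E s.symm,
      beta s (a * b) = beta s a * beta s b) ∧
    (∀ s ∈ S, ∀ r : R, ∀ a ∈ E s.symm, beta s (r • a) = r • beta s a) ∧
    (∀ s ∈ S, ∀ t ∈ S, ∀ a : A,
      a ∈ E (t.trans s).symm ↔ a ∈ E t.symm ∧ beta t a ∈ E s.symm) ∧
    (∀ s ∈ S, ∀ t ∈ S, ∀ a ∈ E (t.trans s).symm,
      beta (t.trans s) a = beta s (beta t a)) ∧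
    -- and the action is orthogonal: A = ⊕_{f ∈ E(S)} E_f:
    ((⨆ f : {f : Fin m ≃. Fin m // f ∈ S ∧ f.trans f = f}, E f.1) = ⊤ ∧
      ∀ f : {f : Fin m ≃. Fin m // f ∈ S ∧ f.trans f = f},
        Disjoint (E f.1)
          (⨆ g : {g : {f : Fin m ≃. Fin m // f ∈ S ∧ f.trans f = f} // g ≠ f},
            E g.1.1)) := by
  subst hS
  have he : IsIdempotentBasis R e := ⟨horth, hfree⟩
  have hsymm : ∀ s : Fin m ≃. Fin m, (pDom s).card ≤ k → (pDom s.symm).card ≤ k :=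
    fun s => (card_pDom_symm s).trans_le
  have htrans : ∀ s t : Fin m ≃. Fin m, (pDom t).card ≤ k → (pDom (t.trans s)).card ≤ k :=
    fun s t => (card_le_card (pDom_trans_subset s t)).trans
  have hE : ∀ s, (pDom s).card ≤ k → E s = blockIdeal M e (pDom s.symm) := fun s hs => by
    by_cases hr : (pDom s.symm).card = k
    · rw [hEmax s hs hr, blockIdeal_of_card_eq hr]
    · rw [hEbot s hs hr, blockIdeal_of_card_ne hr]
  have hβ : ∀ s, (pDom s).card ≤ k → MovesBlocks R M e s (beta s) :=
    fun s hs => movesBlocks_of_posOf hk (hbetamax s hs)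
  have hT : ∀ s, (pDom s).card ≤ k → IsBlockTransport R e (beta s) (E s.symm) (E s) :=
    fun s hs => by
      rw [hE s hs, hE s.symm (hsymm s hs)]
      exact (hβ s hs).isBlockTransport (hbetazero s)
  refine ⟨fun s hs => (hT s hs).mapsTo he, fun s hs => (hT s hs).surjOn he,
    fun s hs => (hT s hs).injOn he, fun s hs => (hT s hs).map_add he,
    fun s hs => (hT s hs).map_mul he, fun s hs => (hT s hs).map_smul he,
    fun s hs t ht a => ?_, fun s hs t ht a ha => ?_, ?_, fun f => ?_⟩
  · rw [hE _ (hsymm _ (htrans s t ht)), hE _ (hsymm t ht), hE _ (hsymm s hs)]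
    exact mem_blockIdeal_trans_iff he hs ht ((hβ t ht).isBlockTransport (hbetazero t)) a
  · rw [hE _ (hsymm _ (htrans s t ht))] at ha
    exact apply_trans_of_mem_blockIdeal he hβ hbetazero hs ht ha
  · exact eq_top_iff.2 <| (iSup_blockIdeal_trans_self_eq_top hsum).ge.trans <|
      iSup_mono fun f => (hE f.1 f.2.1).ge
  · rw [hE f.1 f.2.1]
    exact (disjoint_blockIdeal_iSup_of_trans_self he f).mono_right
      (iSup_mono fun g => (hE g.1.1 g.1.2.1).le)

/-- Let `R` be a commutative ring, `X = {1,…,m}`, `k ≤ m`, `n = C(m,k)` and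
`A = ⊕_{i=1}^{nk} R e_i` with orthogonal idempotents summing to `1`
(reindexed here as `e i l` for `i : Fin n`, `l : Fin k`, so that the block
`e i ·` corresponds to the `k`-subset `M i` of `X`).  Let
`S = { s ∈ I(X) : #dom(s) ≤ k }`, an inverse semigroup under composition
`s * t = t.trans s` and inversion `s⁻¹ = s.symm`, and define `β` on a maximal
`s` (with `dom s = M i`, `im s = M j`) by
`β_s (∑ c_l e i l) = ∑ c_l e j (σ_s l)` where `σ_s` is the permutation of
positions induced by `s`, and `β_s = 0` for non-maximal `s`.  Then `β` is an
orthogonal action of the inverse semigroup `S` on `A`. -/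
theorem exgeral_orthogonal_action
    (R A : Type*) [CommRing R] [CommRing A] [Algebra R A]
    (m k n : ℕ) (hk : 0 < k) (hkm : k ≤ m) (hn : n = m.choose k)
    (M : Fin n ≃ {F : Finset (Fin m) // F.card = k})
    (e : Fin n → Fin k → A)
    (horth : ∀ i l i' l', e i l * e i' l' = if i = i' ∧ l = l' then e i l else 0)
    (hsum : (∑ i, ∑ l, e i l) = 1)
    (hfree : ∀ a : A, ∃! c : Fin n → Fin k → R, a = ∑ i, ∑ l, c i l • e i l)
    (S : Set (Fin m ≃. Fin m)) (hS : S = {s | (pDom s).card ≤ k})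
    (E : (Fin m ≃. Fin m) → Ideal A) (beta : (Fin m ≃. Fin m) → A → A)
    (hEmax : ∀ s ∈ S, ∀ hr : (pDom s.symm).card = k,
      E s = Ideal.span (Set.range (e (M.symm ⟨pDom s.symm, hr⟩))))
    (hEbot : ∀ s ∈ S, (pDom s.symm).card ≠ k → E s = ⊥)
    (hbetamax : ∀ s ∈ S, ∀ (hd : (pDom s).card = k) (hr : (pDom s.symm).card = k)
        (c : Fin k → R),
      beta s (∑ l, c l • e (M.symm ⟨pDom s, hd⟩) l) =
        ∑ l, c l • e (M.symm ⟨pDom s.symm, hr⟩)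
          (posOf hk (pDom s.symm) hr
            ((s (elemAt (pDom s) hd l)).getD (elemAt (pDom s) hd l))))
    (hbetazero : ∀ s, beta s 0 = 0) :
    -- β is an action of the inverse semigroup S on A:
    (∀ s ∈ S, ∀ a ∈ E s.symm, beta s a ∈ E s) ∧
    (∀ s ∈ S, ∀ b ∈ E s, ∃ a ∈ E s.symm, beta s a = b) ∧
    (∀ s ∈ S, ∀ a ∈ E s.symm, ∀ b ∈ E s.symm, beta s a = beta s b → a = b) ∧
    (∀ s ∈ S, ∀ a ∈ E s.symm, ∀ b ∈ E s.symm,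
      beta s (a + b) = beta s a + beta s b) ∧
    (∀ s ∈ S, ∀ a ∈ E s.symm, ∀ b ∈ E s.symm,
      beta s (a * b) = beta s a * beta s b) ∧
    (∀ s ∈ S, ∀ r : R, ∀ a ∈ E s.symm, beta s (r • a) = r • beta s a) ∧
    (∀ s ∈ S, ∀ t ∈ S, ∀ a : A,
      a ∈ E (t.trans s).symm ↔ a ∈ E t.symm ∧ beta t a ∈ E s.symm) ∧
    (∀ s ∈ S, ∀ t ∈ S, ∀ a ∈ E (t.trans s).symm,
      beta (t.trans s) a = beta s (beta t a)) ∧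
    -- and the action is orthogonal: A = ⊕_{f ∈ E(S)} E_f:
    ((⨆ f : {f : Fin m ≃. Fin m // f ∈ S ∧ f.trans f = f}, E f.1) = ⊤ ∧
      ∀ f : {f : Fin m ≃. Fin m // f ∈ S ∧ f.trans f = f},
        Disjoint (E f.1)
          (⨆ g : {g : {f : Fin m ≃. Fin m // f ∈ S ∧ f.trans f = f} // g ≠ f},
            E g.1.1)) :=
  exgeral_orthogonal_action_general R A m k n hk M e horth hsum hfree S hS E beta hEmax hEbot
    hbetamax hbetazero
end
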